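/- arXiv:2310.15531 — 2 statements merged into one kernel-verified Lean document; each statement's English description precedes it below -/
import Mathlib

section
/- Let (W,S) be a Coxeter system and w a word over S with l(w) < γ(W)/2, where γ(W) = 2·min_{s≠t} m_{s,t}. If w is not reduced, then w contains a substring of the form ss for some s ∈ S. -/
/-!
Let `w` be a non-reduced word and `ρ ++ [x]` its shortest non-reduced prefix. Then `ρ = ρ' ++ [y]`
is reduced and both `x` and `y` are right descents of `π ρ`. If `x ≠ y`, write `π ρ = u z` with `u`
shortest in its coset modulo the dihedral subgroup `W_{x,y}`; lengths add, so `z` has both descents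
too, and a reduced word of `z` is alternating and cannot be extended by the other letter. Since
alternating words of length at most `m_xy` are reduced, `m_xy ≤ ℓ(z) ≤ ℓ(π ρ) < |w|`, contradicting
the girth bound. Hence `x = y` and `w` contains `y y`.

This uses the exchange condition, obtained from Tits' permutation representation of `W` on
`W × ZMod 2`, and the fact that `s_x s_y` has order exactly `m_xy`, obtained from the geometric
representation.
-/

open Polynomial Polynomial.Chebyshev

theorem Real.sin_pi_div_natCast_pos {m : ℕ} (hm : 1 < m) : 0 < Real.sin (Real.pi / m) :=
  Real.sin_pos_of_pos_of_lt_pi (by positivity) (div_lt_self Real.pi_pos (by exact_mod_cast hm))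

namespace Polynomial.Chebyshev

theorem U_real_cos_pi_div {m : ℕ} (hm : 1 < m) (n : ℤ) :
    (U ℝ n).eval (Real.cos (Real.pi / m)) =
      Real.sin ((n + 1) * (Real.pi / m)) / Real.sin (Real.pi / m) :=
  eq_div_of_mul_eq (Real.sin_pi_div_natCast_pos hm).ne' (U_real_cos _ n)

theorem U_real_cos_pi_div_two_mul {m : ℕ} (hm : 1 < m) :
    (U ℝ (2 * m)).eval (Real.cos (Real.pi / m)) = 1 := by
  have hmθ : (m : ℝ) * (Real.pi / m) = Real.pi := mul_div_cancel₀ _ (by positivity)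
  rw [U_real_cos_pi_div hm, div_eq_one_iff_eq (Real.sin_pi_div_natCast_pos hm).ne']
  push_cast
  rw [show (2 * (m : ℝ) + 1) * (Real.pi / m) = Real.pi / m + 2 * Real.pi by
    linear_combination 2 * hmθ, Real.sin_add_two_pi]

theorem U_real_cos_pi_div_two_mul_sub_one {m : ℕ} (hm : 1 < m) :
    (U ℝ (2 * m - 1)).eval (Real.cos (Real.pi / m)) = 0 := by
  have hmθ : (m : ℝ) * (Real.pi / m) = Real.pi := mul_div_cancel₀ _ (by positivity)
  rw [U_real_cos_pi_div hm, div_eq_zero_iff]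
  left
  push_cast
  rw [show (2 * (m : ℝ) - 1 + 1) * (Real.pi / m) = 2 * Real.pi by
    linear_combination 2 * hmθ, Real.sin_two_pi]

/-- `U_{2d-1}(cos (π / m)) = 0` forces `2d = m`, and then `U_{2d}(cos (π / m)) = -1`. -/
theorem U_real_cos_pi_div_two_mul_ne_one {m d : ℕ} (hd : 0 < d) (hdm : d < m)
    (h₀ : (U ℝ (2 * d - 1)).eval (Real.cos (Real.pi / m)) = 0) :
    (U ℝ (2 * d)).eval (Real.cos (Real.pi / m)) ≠ 1 := by
  have hm : 1 < m := by omega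
  have hsin := (Real.sin_pi_div_natCast_pos hm).ne'
  rw [U_real_cos_pi_div hm, div_eq_zero_iff, or_iff_left hsin] at h₀
  rw [U_real_cos_pi_div hm, Ne, div_eq_one_iff_eq hsin]
  push_cast at h₀ ⊢
  rw [sub_add_cancel] at h₀
  have hmθ : (m : ℝ) * (Real.pi / m) = Real.pi := mul_div_cancel₀ _ (by positivity)
  have hθ : 0 < Real.pi / m := by positivity
  have hdm' : (d : ℝ) < m := by exact_mod_cast hdm
  have hd' : (1 : ℝ) ≤ d := by exact_mod_cast hd
  generalize Real.pi / m = θ at hsin h₀ hmθ hθ ⊢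
  have h2d : 2 * d * θ = Real.pi := by
    have := (Real.sin_eq_zero_iff_of_lt_of_lt (x := 2 * d * θ - Real.pi) (by nlinarith)
      (by nlinarith)).mp (by rw [Real.sin_sub_pi, h₀, neg_zero])
    linarith
  rw [show (2 * (d : ℝ) + 1) * θ = θ + Real.pi by linarith, Real.sin_add_pi]
  intro h
  exact hsin (by linarith)

end Polynomial.Chebyshev

namespace Module

section CommRing

variable {R M : Type*} [CommRing R] [AddCommGroup M] [Module R M] {x y : M} {f g : Dual R M}

theorem reflection_mul_reflection_pow_apply_self_eq_U (hf : f x = 2) (hg : g y = 2) {c : R}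
    (hfy : f y = -2 * c) (hgx : g x = -2 * c) (k : ℕ) :
    ((reflection hf * reflection hg) ^ k) x =
      (U R (2 * k)).eval c • x + (U R (2 * k - 1)).eval c • y := by
  induction k with
  | zero => simp
  | succ k ih =>
    have h₁ := congrArg (eval c) (U_add_one R (2 * k))
    have h₂ := congrArg (eval c) (U_add_one R (2 * k + 1))
    simp only [eval_sub, eval_mul, eval_ofNat, eval_X, add_sub_cancel_right] at h₁ h₂
    rw [pow_succ', LinearEquiv.mul_apply, ih]
    simp only [LinearEquiv.mul_apply, reflection_apply, map_add, map_sub, map_smul, hf, hg, hfy,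
      hgx]
    push_cast
    rw [show 2 * ((k : ℤ) + 1) = 2 * k + 1 + 1 by ring, add_sub_cancel_right, h₂, h₁]
    module

end CommRing

variable {K V : Type*} [Field K] [NeZero (2 : K)] [AddCommGroup V] [Module K V] {x y : V}
  {f g : Dual K V}

/-- When `c ^ 2 ≠ 1`, `V` is the sum of the plane spanned by `x, y` and `ker f ⊓ ker g`, and
the product of the two reflections is the identity on the latter. -/
theorem reflection_mul_reflection_pow_eq_one (hf : f x = 2) (hg : g y = 2) {c : K}
    (hfy : f y = -2 * c) (hgx : g x = -2 * c) (hc : c ^ 2 ≠ 1) {k : ℕ}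
    (h₁ : (U K (2 * k)).eval c = 1) (h₀ : (U K (2 * k - 1)).eval c = 0) :
    (reflection hf * reflection hg) ^ k = 1 := by
  set A := reflection hf * reflection hg
  have hx : (A ^ k) x = x := by
    rw [reflection_mul_reflection_pow_apply_self_eq_U hf hg hfy hgx, h₁, h₀]; simp
  have hy : (A ^ k) y = y := by
    have hA : reflection hg * reflection hf = A⁻¹ := by simp [A]
    have h := reflection_mul_reflection_pow_apply_self_eq_U hg hf hgx hfy k
    rw [h₁, h₀, zero_smul, one_smul, add_zero, hA, inv_pow] at h
    calc (A ^ k) y = (A ^ k) ((A ^ k)⁻¹ y) := by rw [h]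
      _ = y := by rw [← LinearEquiv.mul_apply, mul_inv_cancel, LinearEquiv.coe_one, id]
  ext z
  have hc' : 1 - c ^ 2 ≠ 0 := sub_ne_zero.mpr (Ne.symm hc)
  have h2 : (2 : K) ≠ 0 := two_ne_zero
  set a := (f z + c * g z) / (2 * (1 - c ^ 2))
  set b := (g z + c * f z) / (2 * (1 - c ^ 2))
  set r := z - a • x - b • y with hr
  have hfr : f r = 0 := by
    simp only [r, map_sub, map_smul, hf, hfy, smul_eq_mul, a, b]; field_simp; ring
  have hgr : g r = 0 := by
    simp only [r, map_sub, map_smul, hg, hgx, smul_eq_mul, a, b]; field_simp; ring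
  have hfix (n : ℕ) : (A ^ n) r = r := by
    induction n with
    | zero => simp
    | succ n ih => simp [A, pow_succ, reflection_apply, hfr, hgr, ih]
  have hz : z = a • x + b • y + r := by rw [hr]; abel
  rw [LinearEquiv.coe_one, id, hz, map_add, map_add, map_smul, map_smul, hx, hy, hfix]

end Module

namespace CoxeterMatrix

variable {B : Type*} (M : CoxeterMatrix B)

theorem one_lt_of_ne_zero {i j : B} (hij : i ≠ j) (h0 : M i j ≠ 0) : 1 < M i j := by
  have := M.off_diagonal i j hij
  omega

/-- The linear form `2 B(e_i, ·)` of the geometric representation, where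
`B(e_i, e_j) = -cos (π / m_ij)`. For `M i j = 0`, that is `m_ij = ∞`, the junk value `π / 0 = 0`
gives the intended `B(e_i, e_j) = -1`. -/
noncomputable def geomForm (i : B) : Module.Dual ℝ (B →₀ ℝ) :=
  Finsupp.linearCombination ℝ fun j => -2 * Real.cos (Real.pi / M i j)

theorem geomForm_single (i j : B) :
    M.geomForm i (Finsupp.single j 1) = -2 * Real.cos (Real.pi / M i j) := by
  simp [geomForm]

theorem geomForm_single_self (i : B) : M.geomForm i (Finsupp.single i 1) = 2 := by
  simp [geomForm_single]

noncomputable def geomReflection (i : B) : (B →₀ ℝ) ≃ₗ[ℝ] (B →₀ ℝ) :=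
  Module.reflection (M.geomForm_single_self i)

theorem geomReflection_mul_pow_apply_single (i j : B) (k : ℕ) :
    ((M.geomReflection i * M.geomReflection j) ^ k) (Finsupp.single i 1) =
      (U ℝ (2 * k)).eval (Real.cos (Real.pi / M i j)) • Finsupp.single i 1 +
        (U ℝ (2 * k - 1)).eval (Real.cos (Real.pi / M i j)) • Finsupp.single j 1 :=
  Module.reflection_mul_reflection_pow_apply_self_eq_U _ _ (M.geomForm_single i j)
    (by rw [geomForm_single, M.symmetric]) k

theorem geomReflection_mul_geomReflection_pow (i j : B) :
    (M.geomReflection i * M.geomReflection j) ^ M i j = 1 := by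
  rcases eq_or_ne i j with rfl | hij
  · rw [M.diagonal, pow_one]
    exact mul_eq_one_iff_eq_inv.mpr (Module.reflection_inv _).symm
  rcases eq_or_ne (M i j) 0 with h0 | h0
  · rw [h0, pow_zero]
  have hm := M.one_lt_of_ne_zero hij h0
  refine Module.reflection_mul_reflection_pow_eq_one _ _ (M.geomForm_single i j)
    (by rw [geomForm_single, M.symmetric]) ?_ (U_real_cos_pi_div_two_mul hm)
    (U_real_cos_pi_div_two_mul_sub_one hm)
  intro h
  apply (Real.sin_pi_div_natCast_pos hm).ne'
  have := Real.sin_sq_add_cos_sq (Real.pi / M i j)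
  exact pow_eq_zero_iff two_ne_zero |>.mp (by linarith)

theorem isLiftable_geomReflection : M.IsLiftable M.geomReflection :=
  M.geomReflection_mul_geomReflection_pow

theorem geomReflection_mul_geomReflection_pow_ne_one {i j : B} (hij : i ≠ j) {d : ℕ}
    (hd : 0 < d) (hdm : M i j = 0 ∨ d < M i j) :
    (M.geomReflection i * M.geomReflection j) ^ d ≠ 1 := by
  intro h
  have hfix := M.geomReflection_mul_pow_apply_single i j d
  rw [h, LinearEquiv.coe_one, id] at hfix
  have hi := DFunLike.congr_fun hfix i
  have hj := DFunLike.congr_fun hfix j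
  simp only [Finsupp.coe_add, Finsupp.coe_smul, Pi.add_apply, Pi.smul_apply, smul_eq_mul,
    Finsupp.single_eq_same, Finsupp.single_eq_of_ne hij, Finsupp.single_eq_of_ne hij.symm,
    mul_zero, mul_one, zero_add, add_zero] at hi hj
  rcases hdm with h0 | hdm
  · rw [h0, Nat.cast_zero, div_zero, Real.cos_zero, U_eval_one] at hj
    push_cast at hj
    have : (d : ℝ) = 0 := by linarith
    exact hd.ne' (by exact_mod_cast this)
  · exact U_real_cos_pi_div_two_mul_ne_one hd hdm hj.symm hi.symm

theorem orderOf_geomReflection_mul_geomReflection {i j : B} (hij : i ≠ j) :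
    orderOf (M.geomReflection i * M.geomReflection j) = M i j := by
  rcases Nat.eq_zero_or_pos (M i j) with h0 | hpos
  · rw [h0, orderOf_eq_zero_iff']
    exact fun d hd => M.geomReflection_mul_geomReflection_pow_ne_one hij hd (.inl h0)
  · exact (orderOf_eq_iff hpos).mpr ⟨M.geomReflection_mul_geomReflection_pow i j,
      fun d hdm hd => M.geomReflection_mul_geomReflection_pow_ne_one hij hd (.inr hdm)⟩

end CoxeterMatrix

namespace CoxeterSystem

variable {B W : Type*} [Group W] {M : CoxeterMatrix B} (cs : CoxeterSystem M W)

local prefix:100 "s " => cs.simple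
local prefix:100 "π " => cs.wordProd
local prefix:100 "ℓ " => cs.length
local prefix:100 "ris " => cs.rightInvSeq

theorem orderOf_simple_mul_simple (i j : B) : orderOf (s i * s j) = M i j := by
  rcases eq_or_ne i j with rfl | hij
  · simp
  refine Nat.dvd_antisymm (orderOf_dvd_of_pow_eq_one (cs.simple_mul_simple_pow i j)) ?_
  have h := orderOf_map_dvd (cs.lift ⟨_, M.isLiftable_geomReflection⟩) (s i * s j)
  rwa [map_mul, cs.lift_apply_simple, cs.lift_apply_simple,
    M.orderOf_geomReflection_mul_geomReflection hij] at h

theorem prod_map_alternatingWord_two_mul {G : Type*} [Monoid G] (f : B → G) (i j : B) (m : ℕ) :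
    ((alternatingWord i j (2 * m)).map f).prod = (f i * f j) ^ m := by
  induction m with
  | zero => simp [alternatingWord]
  | succ m ih => simp [Nat.mul_succ, alternatingWord_succ, ih, pow_succ]

theorem inv_wordProd_alternatingWord_mul_wordProd_alternatingWord_succ (i j : B) (k : ℕ) :
    (π alternatingWord i j k)⁻¹ * π alternatingWord i j (k + 1) = (s j * s i) ^ k * s j := by
  induction k generalizing i j with
  | zero => simp [alternatingWord]
  | succ k ih =>
    rw [alternatingWord_succ i j k, alternatingWord_succ i j (k + 1), wordProd_concat,
      wordProd_concat, mul_inv_rev, inv_simple, mul_assoc, ← mul_assoc _ _ (s j), ih,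
      mul_pow_mul, pow_succ']
    simp only [mul_assoc]

theorem rightInvSeq_alternatingWord (i j : B) (k : ℕ) :
    ris alternatingWord i j k = ((List.range k).map fun n => (s j * s i) ^ n * s j).reverse := by
  induction k with
  | zero => simp [alternatingWord]
  | succ k ih =>
    have h := cs.inv_wordProd_alternatingWord_mul_wordProd_alternatingWord_succ i j k
    rw [alternatingWord_succ', wordProd_cons] at h
    rw [alternatingWord_succ', rightInvSeq, ih, mul_assoc, h, List.range_succ, List.map_append,
      List.reverse_append]
    rfl

section Parity

variable [DecidableEq W]

def parityPerm (i : B) : Equiv.Perm (W × ZMod 2) :=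
  Function.Involutive.toPerm (fun p => (s i * p.1 * s i, p.2 + if p.1 = s i then 1 else 0)) <| by
    rintro ⟨u, e⟩
    have hu : s i * (u * s i) = s i ↔ u = s i := by
      rw [← mul_assoc, mul_eq_right, mul_eq_one_iff_eq_inv', inv_simple]
    simp only [mul_assoc, hu, simple_mul_simple_self, mul_one, simple_mul_simple_cancel_left]
    split_ifs <;> simp only [add_assoc, CharTwo.add_self_eq_zero, add_zero]

theorem parityPerm_apply (i : B) (p : W × ZMod 2) :
    cs.parityPerm i p = (s i * p.1 * s i, p.2 + if p.1 = s i then 1 else 0) :=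
  rfl

theorem prod_map_parityPerm_apply (ω : List B) (u : W) (e : ZMod 2) :
    (ω.map cs.parityPerm).prod (u, e) = (π ω * u * (π ω)⁻¹, e + (ris ω).count u) := by
  induction ω with
  | nil => simp
  | cons i ω ih =>
    have hu : π ω * u * (π ω)⁻¹ = s i ↔ ((π ω)⁻¹ * s i * π ω == u) = true := by
      rw [beq_iff_eq]
      constructor <;> intro h <;> rw [← h] <;> group
    rw [List.map_cons, List.prod_cons, Equiv.Perm.mul_apply, ih]
    rw [parityPerm_apply, wordProd_cons, rightInvSeq, List.count_cons, if_congr hu rfl rfl]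
    refine Prod.ext (by simp only [mul_inv_rev, inv_simple]; group) ?_
    simp only
    push_cast
    ring

theorem isLiftable_parityPerm : M.IsLiftable cs.parityPerm := by
  intro i j
  ext ⟨u, e⟩ : 1
  have hπ : π alternatingWord i j (2 * M i j) = 1 := by
    rw [wordProd, prod_map_alternatingWord_two_mul, simple_mul_simple_pow]
  -- the inversion sequence of the braid relator lists every reflection twice
  have hcount : (ris alternatingWord i j (2 * M i j)).count u =
      2 * ((List.range (M i j)).map fun n => (s j * s i) ^ n * s j).count u := by
    rw [rightInvSeq_alternatingWord, List.count_reverse, two_mul, List.range_add, List.map_append,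
      List.map_map, List.count_append, two_mul]
    congr 3
    funext n
    simp [pow_add]
  rw [← prod_map_alternatingWord_two_mul, prod_map_parityPerm_apply, hπ, hcount]
  simp [show (2 : ZMod 2) = 0 from rfl]

def parityRep : W →* Equiv.Perm (W × ZMod 2) :=
  cs.lift ⟨cs.parityPerm, cs.isLiftable_parityPerm⟩

theorem parityRep_wordProd (ω : List B) : cs.parityRep (π ω) = (ω.map cs.parityPerm).prod := by
  rw [wordProd, map_list_prod, List.map_map]
  exact congrArg List.prod (List.map_congr_left fun i _ => cs.lift_apply_simple _ i)

theorem count_rightInvSeq_eq_of_wordProd_eq {ω ω' : List B} (h : π ω = π ω') (u : W) :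
    ((ris ω).count u : ZMod 2) = (ris ω').count u := by
  have := congrArg (fun w => (cs.parityRep w (u, 0)).2) h
  simpa [parityRep_wordProd, prod_map_parityPerm_apply] using this

end Parity

theorem simple_mem_rightInvSeq_of_isRightDescent {ω : List B} {i : B}
    (h : cs.IsRightDescent (π ω) i) : s i ∈ ris ω := by
  classical
  obtain ⟨τ, hτ, hτω⟩ := cs.exists_isReduced (π ω * s i)
  have hτi : π (τ ++ [i]) = π ω := by
    rw [wordProd_append, ← hτω, wordProd_singleton, simple_mul_simple_cancel_right]
  have hred : cs.IsReduced (τ ++ [i]) := by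
    have := cs.isRightDescent_iff.mp h
    rw [IsReduced, hτi, List.length_append, ← hτ.eq, ← hτω, List.length_singleton, this]
  have hcount : (ris (τ ++ [i])).count (s i) = 1 :=
    List.count_eq_one_of_mem hred.nodup_rightInvSeq
      (by rw [← List.concat_eq_append, rightInvSeq_concat]; simp)
  have := cs.count_rightInvSeq_eq_of_wordProd_eq hτi (s i)
  rw [hcount] at this
  by_contra hmem
  rw [List.count_eq_zero_of_not_mem hmem] at this
  exact absurd this (by decide)

theorem exists_wordProd_mul_simple_eq_wordProd_eraseIdx {ω : List B} {i : B}
    (h : cs.IsRightDescent (π ω) i) : ∃ k < ω.length, π ω * s i = π (ω.eraseIdx k) := by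
  obtain ⟨k, hk, hki⟩ := List.mem_iff_getElem.mp (cs.simple_mem_rightInvSeq_of_isRightDescent h)
  refine ⟨k, by simpa using hk, ?_⟩
  rw [← wordProd_mul_getD_rightInvSeq, List.getD_eq_getElem _ _ hk, hki]

theorem IsReduced.of_append {ω ω' : List B} (h : cs.IsReduced (ω ++ ω')) : cs.IsReduced ω := by
  simpa using h.take ω.length

theorem isReduced_append_singleton_iff {ω : List B} (hω : cs.IsReduced ω) (i : B) :
    cs.IsReduced (ω ++ [i]) ↔ ¬cs.IsRightDescent (π ω) i := by
  rw [IsReduced, wordProd_append, wordProd_singleton, List.length_append, List.length_singleton,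
    ← hω.eq, IsRightDescent]
  rcases cs.length_mul_simple (π ω) i with h | h <;> omega

theorem IsReduced.isRightDescent_append_singleton {ω : List B} {i : B}
    (h : cs.IsReduced (ω ++ [i])) : cs.IsRightDescent (π (ω ++ [i])) i := by
  rw [IsRightDescent, h.eq, wordProd_append, wordProd_singleton, simple_mul_simple_cancel_right,
    List.length_append, List.length_singleton]
  exact Nat.lt_succ_of_le (cs.length_wordProd_le ω)

theorem exists_isReduced_sublist (ω : List B) :
    ∃ ω' : List B, ω'.Sublist ω ∧ cs.IsReduced ω' ∧ π ω' = π ω := by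
  induction ω using List.reverseRecOn with
  | nil => exact ⟨[], List.Sublist.refl _, by simp [IsReduced], rfl⟩
  | append_singleton ω c ih =>
    obtain ⟨ω', hsub, hred, hprod⟩ := ih
    have hprod' : π (ω ++ [c]) = π ω' * s c := by rw [wordProd_append, hprod, wordProd_singleton]
    by_cases h : cs.IsReduced (ω' ++ [c])
    · exact ⟨ω' ++ [c], hsub.append_right [c], h,
        by rw [hprod', wordProd_append, wordProd_singleton]⟩
    · have hdesc := not_not.mp ((cs.isReduced_append_singleton_iff hred c).not.mp h)
      obtain ⟨k, hk, hdel⟩ := cs.exists_wordProd_mul_simple_eq_wordProd_eraseIdx hdesc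
      refine ⟨ω'.eraseIdx k,
        (List.eraseIdx_sublist _ _).trans (hsub.trans (List.sublist_append_left _ _)), ?_,
        by rw [hprod', hdel]⟩
      have := cs.isRightDescent_iff.mp hdesc
      have := List.length_eraseIdx_add_one hk
      rw [IsReduced, ← hdel]
      rw [hred.eq] at *
      omega

theorem isReduced_alternatingWord {i j : B} {k : ℕ} (hk : M i j = 0 ∨ k ≤ M i j) :
    cs.IsReduced (alternatingWord i j k) := by
  induction k generalizing i j with
  | zero => simp [IsReduced, alternatingWord]
  | succ k ih =>
    have hred : cs.IsReduced (alternatingWord j i k) := ih (by rw [M.symmetric]; omega)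
    rw [alternatingWord_succ, List.concat_eq_append, cs.isReduced_append_singleton_iff hred]
    intro hdesc
    obtain ⟨n, hn, hnj⟩ : ∃ n < k, (s i * s j) ^ n * s i = s j := by
      simpa [rightInvSeq_alternatingWord] using cs.simple_mem_rightInvSeq_of_isRightDescent hdesc
    have hpow : (s i * s j) ^ (n + 1) = 1 := by
      rw [pow_succ, ← simple_mul_simple_cancel_right cs (w := (s i * s j) ^ n) (i := i), hnj]
      simp [mul_assoc]
    have hdvd := cs.orderOf_simple_mul_simple i j ▸ orderOf_dvd_of_pow_eq_one hpow
    rcases hk with h0 | hk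
    · rw [h0, zero_dvd_iff] at hdvd
      omega
    · exact absurd (Nat.le_of_dvd (by omega) hdvd) (by omega)

theorem eq_alternatingWord_of_isReduced {i j : B} {ζ : List B} (hζ : cs.IsReduced ζ)
    (hJ : ∀ x ∈ ζ, x = i ∨ x = j) (hlast : ∀ x ∈ ζ.getLast?, x = j) :
    ζ = alternatingWord i j ζ.length := by
  induction ζ using List.reverseRecOn generalizing i j with
  | nil => rfl
  | append_singleton ζ c ih =>
    obtain rfl : c = j := hlast c (by simp)
    have hlast' : ∀ x ∈ ζ.getLast?, x = i := by
      intro x hx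
      refine (hJ x (by simp [List.mem_of_getLast? hx])).resolve_right ?_
      rintro rfl
      obtain ⟨ζ', rfl⟩ := List.getLast?_eq_some_iff.mp hx
      exact (cs.isReduced_append_singleton_iff hζ.of_append x).mp hζ
        hζ.of_append.isRightDescent_append_singleton
    have := ih hζ.of_append (fun x hx => (hJ x (by simp [hx])).symm) hlast'
    rw [List.length_append, List.length_singleton, alternatingWord_succ, ← this,
      List.concat_eq_append]

theorem ne_zero_and_le_length_of_not_isReduced_append {i j : B} {ζ : List B}
    (hζ : cs.IsReduced ζ) (hJ : ∀ x ∈ ζ, x = i ∨ x = j) (hlast : ∀ x ∈ ζ.getLast?, x = j)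
    (hi : ¬cs.IsReduced (ζ ++ [i])) : M i j ≠ 0 ∧ M i j ≤ ζ.length := by
  rw [cs.eq_alternatingWord_of_isReduced hζ hJ hlast, ← List.concat_eq_append,
    ← alternatingWord_succ] at hi
  by_contra h
  exact hi (cs.isReduced_alternatingWord (by rw [M.symmetric]; omega))

theorem length_mul_wordProd_of_forall_length_le {J : Set B} {u : W}
    (hu : ∀ ζ : List B, (∀ x ∈ ζ, x ∈ J) → ℓ u ≤ ℓ (u * π ζ)) {ζ : List B}
    (hζJ : ∀ x ∈ ζ, x ∈ J) (hζ : cs.IsReduced ζ) : ℓ (u * π ζ) = ℓ u + ζ.length := by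
  induction ζ using List.reverseRecOn with
  | nil => simp
  | append_singleton ζ c ih =>
    have ih := ih (fun x hx => hζJ x (by simp [hx])) hζ.of_append
    rw [wordProd_append, wordProd_singleton, ← mul_assoc, List.length_append,
      List.length_singleton]
    rcases cs.length_mul_simple (u * π ζ) c with h | hdesc
    · omega
    exfalso
    obtain ⟨υ, hυ, rfl⟩ := cs.exists_isReduced u
    obtain ⟨k, hk, hdel⟩ := cs.exists_wordProd_mul_simple_eq_wordProd_eraseIdx (ω := υ ++ ζ)
      (i := c) (by rw [wordProd_append, IsRightDescent]; omega)
    rw [wordProd_append] at hdel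
    rcases lt_or_ge k υ.length with hkυ | hkυ
    · -- the deleted letter lies in `υ`: then `π υ` is not shortest in its coset
      rw [List.eraseIdx_append_of_lt_length hkυ, wordProd_append] at hdel
      have hπ : π υ * π (ζ ++ [c] ++ ζ.reverse) = π (υ.eraseIdx k) := by
        rw [wordProd_append, wordProd_append, wordProd_reverse, wordProd_singleton,
          ← mul_inv_eq_iff_eq_mul.mpr hdel]
        group
      have := hu (ζ ++ [c] ++ ζ.reverse) fun x hx => hζJ x (by simp at hx ⊢; tauto)
      have := cs.length_wordProd_le (υ.eraseIdx k)
      have := List.length_eraseIdx_add_one hkυ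
      rw [hπ, hυ.eq] at *
      omega
    · -- the deleted letter lies in `ζ`: then `ζ ++ [c]` is not reduced
      rw [List.eraseIdx_append_of_length_le hkυ, wordProd_append, mul_assoc,
        mul_right_inj] at hdel
      have := hζ.eq
      have := cs.length_wordProd_le (ζ.eraseIdx (k - υ.length))
      have := List.length_eraseIdx_le ζ (k - υ.length)
      rw [wordProd_append, wordProd_singleton, hdel, List.length_append, List.length_singleton]
        at *
      omega

theorem exists_minimal_mul_wordProd_eq (v : W) (J : Set B) :
    ∃ (u : W) (ζ : List B), (∀ ζ' : List B, (∀ x ∈ ζ', x ∈ J) → ℓ u ≤ ℓ (u * π ζ')) ∧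
      (∀ x ∈ ζ, x ∈ J) ∧ cs.IsReduced ζ ∧ u * π ζ = v := by
  set S : Set (List B) := {ζ | ∀ x ∈ ζ, x ∈ J}
  set ζ₀ := Function.argminOn (fun ζ => ℓ (v * π ζ)) S ⟨[], by simp [S]⟩
  have hζ₀ : ζ₀ ∈ S := Function.argminOn_mem _ _ _
  obtain ⟨ζ, hsub, hred, hprod⟩ := cs.exists_isReduced_sublist ζ₀.reverse
  refine ⟨v * π ζ₀, ζ, fun ζ' hζ' => ?_,
    fun x hx => hζ₀ x (List.mem_reverse.mp (hsub.subset hx)), hred,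
    by rw [hprod, wordProd_reverse, mul_inv_cancel_right]⟩
  rw [mul_assoc, ← wordProd_append]
  exact Function.argminOn_le (fun ζ => ℓ (v * π ζ)) S
    (show ζ₀ ++ ζ' ∈ S from fun x hx => (List.mem_append.mp hx).elim (hζ₀ x) (hζ' x))

theorem ne_zero_and_le_length_of_isRightDescent {v : W} {i j : B} (hi : cs.IsRightDescent v i)
    (hj : cs.IsRightDescent v j) : M i j ≠ 0 ∧ M i j ≤ ℓ v := by
  obtain ⟨u, ζ, hu, hζJ, hred, rfl⟩ := cs.exists_minimal_mul_wordProd_eq v {i, j}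
  have hlen := cs.length_mul_wordProd_of_forall_length_le hu hζJ hred
  have hnot (d : B) (hd : d = i ∨ d = j) (hdesc : cs.IsRightDescent (u * π ζ) d) :
      ¬cs.IsReduced (ζ ++ [d]) := by
    intro hred'
    have := cs.length_mul_wordProd_of_forall_length_le hu
      (by simpa [or_imp, forall_and] using ⟨hζJ, hd⟩) hred'
    rw [wordProd_append, wordProd_singleton, ← mul_assoc, List.length_append,
      List.length_singleton] at this
    rw [IsRightDescent] at hdesc
    omega
  by_cases hlast : ∀ x ∈ ζ.getLast?, x = j
  · have := cs.ne_zero_and_le_length_of_not_isReduced_append hred hζJ hlast (hnot i (.inl rfl) hi)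
    omega
  · have hlast' : ∀ x ∈ ζ.getLast?, x = i := fun x hx =>
      (hζJ x (List.mem_of_getLast? hx)).resolve_right fun hxj =>
        hlast fun y hy => (Option.mem_unique hy hx).trans hxj
    have := cs.ne_zero_and_le_length_of_not_isReduced_append hred
      (fun x hx => (hζJ x hx).symm) hlast' (hnot j (.inr rfl) hj)
    rw [M.symmetric] at this
    omega

end CoxeterSystem

/-- Let `(W, S)` be a Coxeter system and `w` a word over `S` with
`l(w) < γ(W)/2`, where `γ(W) = 2 · min_{s ≠ t} m_{s,t}` is the girth (Mathlib's
convention: the matrix entry `0` stands for `∞`). If `w` is not reduced, then `w`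
contains a substring of the form `s s` for some letter `s`. -/
theorem not_reduced_short_word_has_double_letter {B W : Type*} [Group W]
    {M : CoxeterMatrix B} (cs : CoxeterSystem M W) (w : List B)
    (hgirth : ∀ s t : B, s ≠ t → M s t = 0 ∨ 2 * w.length < 2 * M s t)
    (hnotred : ¬ cs.IsReduced w) :
    ∃ (l₁ : List B) (s : B) (l₂ : List B), w = l₁ ++ s :: s :: l₂ := by
  induction w using List.reverseRecOn with
  | nil => exact absurd (by simp [CoxeterSystem.IsReduced]) hnotred
  | append_singleton w x ih =>
    by_cases hw : cs.IsReduced w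
    · obtain rfl | ⟨ρ, y, rfl⟩ := List.eq_nil_or_concat' w
      · exact absurd (by simp [CoxeterSystem.IsReduced]) hnotred
      have hx := not_not.mp ((cs.isReduced_append_singleton_iff hw x).not.mp hnotred)
      by_cases hyx : y = x
      · exact ⟨ρ, x, [], by simp [hyx]⟩
      obtain ⟨h0, hle⟩ := cs.ne_zero_and_le_length_of_isRightDescent
        hw.isRightDescent_append_singleton hx
      have := hgirth y x hyx
      rw [hw.eq] at hle
      simp only [List.length_append, List.length_singleton] at this hle
      omega
    · obtain ⟨l₁, s, l₂, rfl⟩ := ih (fun s t hst => (hgirth s t hst).imp_right (by simp; omega)) hw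
      exact ⟨l₁, s, l₂ ++ [x], by simp⟩
end

section
/- Let (W,S) be a Coxeter system, I ⊆ S, and let t, t' be two distinct elements of S \ I. Then the sets t^{W_I} = {w t w^{-1} : w ∈ W_I} and t'^{W_I} = {w t' w^{-1} : w ∈ W_I} are disjoint. -/
/-!
In the geometric representation of `W` on `⨁_{s ∈ S} ℝ αₛ`, a generator `s ≠ t'` changes only
the `αₛ`-coordinate of a vector, so `W_J` preserves the `α_{t'}`-coordinate whenever `t' ∉ J`,
while `t'` negates `α_{t'}`; hence `t' ∉ W_J`. If `w t w⁻¹ = w' t' w'⁻¹` with `w, w' ∈ W_I`,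
then `t' = u t u⁻¹` with `u = w'⁻¹ w`, so `t' ∈ W_{I ∪ {t}}`, although `t' ∉ I ∪ {t}`.
-/

open Real

lemma Real.sin_two_pi_div_ne_zero {m : ℕ} (hm : 3 ≤ m) : sin (2 * π / m) ≠ 0 := by
  have hm' : (2 : ℝ) < m := by exact_mod_cast hm
  refine (sin_pos_of_pos_of_lt_pi (by positivity) ?_).ne'
  rw [div_lt_iff₀ (by linarith)]
  nlinarith [pi_pos]

namespace Polynomial.Chebyshev

lemma S_eval_two_mul_cos_eq_zero {φ : ℝ} (hφ : sin φ ≠ 0) {k : ℤ}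
    (h : sin ((k + 1) * φ) = 0) : (S ℝ k).eval (2 * cos φ) = 0 := by
  have := S_two_mul_real_cos φ k
  rw [h] at this
  exact (mul_eq_zero.1 this).resolve_right hφ

lemma S_add_S_sub_one_eval_two_mul_cos_eq_zero {φ : ℝ} (hφ : sin φ ≠ 0) {k : ℤ}
    (h : (2 * k + 1) * φ = 2 * π) :
    (S ℝ k).eval (2 * cos φ) + (S ℝ (k - 1)).eval (2 * cos φ) = 0 := by
  have hsum : sin ((k + 1) * φ) + sin (k * φ) = 0 := by
    rw [show (k + 1) * φ = 2 * π - k * φ by linarith, sin_two_pi_sub, neg_add_cancel]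
  have hk := S_two_mul_real_cos φ k
  have hk' := S_two_mul_real_cos φ (k - 1)
  push_cast at hk'
  rw [sub_add_cancel] at hk'
  refine (mul_eq_zero.1 ?_).resolve_right hφ
  rw [add_mul, hk, hk', hsum]

/-- The two coefficients of `Module.reflection_mul_reflection_pow` for `m`-th powers, at
`t = 4 cos² (π / m) - 2`. -/
lemma reflection_pow_coeffs_eq_zero {m : ℕ} (hm : 3 ≤ m) :
    let t := 2 * cos (2 * π / m)
    (S ℝ ((m - 2) / 2)).eval t * ((S ℝ ((m - 1) / 2)).eval t + (S ℝ ((m - 3) / 2)).eval t) = 0 ∧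
    (S ℝ ((m - 1) / 2)).eval t * ((S ℝ (m / 2)).eval t + (S ℝ ((m - 2) / 2)).eval t) = 0 := by
  intro t
  have hφ := sin_two_pi_div_ne_zero hm
  obtain ⟨k, rfl | rfl⟩ := Nat.even_or_odd' m
  · have hk : (k : ℝ) ≠ 0 := by norm_cast; omega
    have h0 : (S ℝ (k - 1)).eval t = 0 := by
      refine S_eval_two_mul_cos_eq_zero hφ ?_
      rw [show ((k - 1 : ℤ) + 1 : ℝ) * (2 * π / (2 * k : ℕ)) = π by push_cast; field_simp; ring]
      exact sin_pi
    rw [show ((2 * k : ℕ) - 2 : ℤ) / 2 = k - 1 by omega,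
      show ((2 * k : ℕ) - 1 : ℤ) / 2 = k - 1 by omega, h0]
    simp
  · have h0 := S_add_S_sub_one_eval_two_mul_cos_eq_zero hφ (k := k) (by push_cast; field_simp)
    rw [show ((2 * k + 1 : ℕ) - 1 : ℤ) / 2 = k by omega,
      show ((2 * k + 1 : ℕ) - 3 : ℤ) / 2 = k - 1 by omega,
      show ((2 * k + 1 : ℕ) : ℤ) / 2 = k by omega,
      show ((2 * k + 1 : ℕ) - 2 : ℤ) / 2 = k - 1 by omega]
    simp only [t, h0, mul_zero, and_self]

end Polynomial.Chebyshev

noncomputable section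

namespace CoxeterMatrix

open Polynomial.Chebyshev

variable {B : Type*} (M : CoxeterMatrix B)

def simpleRoot (i : B) : B →₀ ℝ := Finsupp.single i 1

/-- For `M i j = 0` (that is, `m = ∞`) the junk value `π / 0 = 0` gives the coefficient `-2`,
which is the usual value of the Tits form. -/
def simpleCoroot (i : B) : Module.Dual ℝ (B →₀ ℝ) :=
  Finsupp.linearCombination ℝ fun j => -2 * cos (π / M i j)

lemma simpleCoroot_simpleRoot (i j : B) :
    M.simpleCoroot i (simpleRoot j) = -2 * cos (π / M i j) := by
  simp [simpleCoroot, simpleRoot]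

lemma simpleCoroot_simpleRoot_self (i : B) : M.simpleCoroot i (simpleRoot i) = 2 := by
  simp [simpleCoroot_simpleRoot]

def geometricReflection (i : B) : (B →₀ ℝ) ≃ₗ[ℝ] (B →₀ ℝ) :=
  Module.reflection (M.simpleCoroot_simpleRoot_self i)

lemma geometricReflection_apply (i : B) (v : B →₀ ℝ) :
    M.geometricReflection i v = v - M.simpleCoroot i v • simpleRoot i :=
  Module.reflection_apply _ _

lemma isLiftable_geometricReflection : M.IsLiftable M.geometricReflection := by
  intro i j
  obtain rfl | hij := eq_or_ne i j
  · rw [M.diagonal, pow_one]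
    exact mul_eq_one_iff_eq_inv.2 (Module.reflection_inv _).symm
  obtain hm | hm | hm : M i j = 0 ∨ M i j = 2 ∨ 3 ≤ M i j := by
    have := M.off_diagonal i j hij
    omega
  · rw [hm, pow_zero]
  · have hij : M.simpleCoroot i (simpleRoot j) = 0 := by simp [simpleCoroot_simpleRoot, hm]
    have hji : M.simpleCoroot j (simpleRoot i) = 0 := by
      simp [simpleCoroot_simpleRoot, M.symmetric j i, hm]
    ext v : 1
    simp only [hm, pow_two, LinearEquiv.mul_apply, geometricReflection_apply, map_sub, map_smul,
      hij, hji, M.simpleCoroot_simpleRoot_self, LinearEquiv.coe_one, id_eq]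
    module
  · have ht : 2 * cos (2 * π / M i j) =
        M.simpleCoroot i (simpleRoot j) * M.simpleCoroot j (simpleRoot i) - 2 := by
      rw [simpleCoroot_simpleRoot, simpleCoroot_simpleRoot, M.symmetric j i,
        mul_div_assoc, cos_two_mul]
      ring
    obtain ⟨hA, hB⟩ := reflection_pow_coeffs_eq_zero hm
    rw [← LinearEquiv.toLinearMap_inj, geometricReflection, geometricReflection,
      Module.reflection_mul_reflection_pow _ _ _ _ ht, hA, hB]
    simp

end CoxeterMatrix

end

def Module.Dual.stabilizer {R V : Type*} [CommRing R] [AddCommGroup V] [Module R V]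
    (f : Module.Dual R V) : Subgroup (V ≃ₗ[R] V) where
  carrier := {e | ∀ v, f (e v) = f v}
  mul_mem' he he' v := by rw [LinearEquiv.mul_apply, he, he']
  one_mem' _ := rfl
  inv_mem' {e} he v := by
    rw [← he (e⁻¹ v), ← LinearEquiv.mul_apply, mul_inv_cancel]
    rfl

namespace CoxeterSystem

variable {B W : Type*} [Group W] {M : CoxeterMatrix B} (cs : CoxeterSystem M W)

theorem simple_notMem_closure_simple_image {J : Set B} {i : B} (hi : i ∉ J) :
    cs.simple i ∉ Subgroup.closure (cs.simple '' J) := by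
  set ρ := cs.lift ⟨M.geometricReflection, M.isLiftable_geometricReflection⟩
  have hρ (j : B) : ρ (cs.simple j) = M.geometricReflection j :=
    cs.lift_apply_simple M.isLiftable_geometricReflection j
  have hle : Subgroup.closure (cs.simple '' J) ≤
      (Module.Dual.stabilizer (Finsupp.lapply i)).comap ρ := by
    rw [Subgroup.closure_le]
    rintro _ ⟨j, hj, rfl⟩ v
    have hji : j ≠ i := fun h => hi (h ▸ hj)
    simp [hρ, M.geometricReflection_apply, CoxeterMatrix.simpleRoot, hji]
  intro hmem
  have := hle hmem (CoxeterMatrix.simpleRoot i)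
  rw [hρ, M.geometricReflection_apply, M.simpleCoroot_simpleRoot_self] at this
  norm_num [CoxeterMatrix.simpleRoot] at this

end CoxeterSystem

theorem conj_orbits_of_distinct_simples_disjoint_general {B W : Type*} [Group W]
    {M : CoxeterMatrix B} (cs : CoxeterSystem M W) (I : Set B) (t t' : B)
    (ht' : t' ∉ I) (htt' : t ≠ t') :
    Disjoint
      {x : W | ∃ w ∈ Subgroup.closure (cs.simple '' I), x = w * cs.simple t * w⁻¹}
      {x : W | ∃ w ∈ Subgroup.closure (cs.simple '' I), x = w * cs.simple t' * w⁻¹} := by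
  rw [Set.disjoint_left]
  rintro _ ⟨w, hw, rfl⟩ ⟨w', hw', heq⟩
  have hmono : Subgroup.closure (cs.simple '' I) ≤ Subgroup.closure (cs.simple '' insert t I) :=
    Subgroup.closure_mono (Set.image_mono (Set.subset_insert t I))
  have ht : cs.simple t ∈ Subgroup.closure (cs.simple '' insert t I) :=
    Subgroup.subset_closure ⟨t, Set.mem_insert t I, rfl⟩
  have hconj : cs.simple t' = (w'⁻¹ * w) * cs.simple t * (w'⁻¹ * w)⁻¹ :=
    calc cs.simple t' = w'⁻¹ * (w' * cs.simple t' * w'⁻¹) * w' := by group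
      _ = (w'⁻¹ * w) * cs.simple t * (w'⁻¹ * w)⁻¹ := by rw [← heq]; group
  refine cs.simple_notMem_closure_simple_image (J := insert t I) (i := t') ?_ ?_
  · simp [htt'.symm, ht']
  · rw [hconj]
    have hu := hmono (mul_mem (inv_mem hw') hw)
    exact mul_mem (mul_mem hu ht) (inv_mem hu)

/-- Let `(W, S)` be a Coxeter system, `I ⊆ S`, and let `t, t'` be two
distinct elements of `S \ I`. Then the sets `t^{W_I} = {w t w⁻¹ : w ∈ W_I}` and
`t'^{W_I} = {w t' w⁻¹ : w ∈ W_I}` are disjoint. -/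
theorem conj_orbits_of_distinct_simples_disjoint {B W : Type*} [Group W]
    {M : CoxeterMatrix B} (cs : CoxeterSystem M W) (I : Set B) (t t' : B)
    (ht : t ∉ I) (ht' : t' ∉ I) (htt' : t ≠ t') :
    Disjoint
      {x : W | ∃ w ∈ Subgroup.closure (cs.simple '' I), x = w * cs.simple t * w⁻¹}
      {x : W | ∃ w ∈ Subgroup.closure (cs.simple '' I), x = w * cs.simple t' * w⁻¹} :=
  conj_orbits_of_distinct_simples_disjoint_general cs I t t' ht' htt'
end
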